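/- arXiv:2002.08831 — 6 statements merged into one kernel-verified Lean document; each statement's English description precedes it below -/
import Mathlib

section
/- Rank-k covariance downdate: Let X₁ be an m×n real matrix (n > k ≥ 1) with sample covariance S₁, let Y be the m×k submatrix consisting of columns of X₁ indexed by a k-element subset J, and let X₂ be the m×(n−k) matrix of remaining columns with sample covariance S₂. Let x̄₁ and ȳ denote the column means of X₁ and Y. Then (n−k−1)·S₂ = (n−1)·S₁ − KKᵀ, where K = Y − (ȳ + √(n/(n−k))·(ȳ − x̄₁))·1ₖᵀ. -/
open Matrix

/-- Sample covariance (with Bessel's correction) of an m×N data matrix. -/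
noncomputable def sampleCov {m : ℕ} {ι : Type*} [Fintype ι]
    (Z : Matrix (Fin m) ι ℝ) : Matrix (Fin m) (Fin m) ℝ :=
  ((Fintype.card ι : ℝ) - 1)⁻¹ •
    ((Matrix.of fun i j => Z i j - (∑ l, Z i l) / (Fintype.card ι : ℝ)) *
      (Matrix.of fun i j => Z i j - (∑ l, Z i l) / (Fintype.card ι : ℝ))ᵀ)

lemma sum_shift_mul {ι : Type*} (s : Finset ι) (f g : ι → ℝ) (ca cb : ℝ) :
    ∑ j ∈ s, (f j - ca) * (g j - cb) =
      ∑ j ∈ s, f j * g j - cb * ∑ j ∈ s, f j - ca * ∑ j ∈ s, g j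
        + (s.card : ℝ) * (ca * cb) := by
  simp only [sub_mul, mul_sub, Finset.sum_sub_distrib, ← Finset.mul_sum, ← Finset.sum_mul,
    Finset.sum_const, nsmul_eq_mul]
  ring

/-- Rank-k covariance matrix downdate (plus-sign variant). -/
theorem rank_k_covariance_downdate {m n k : ℕ} (hk : 1 ≤ k) (hkn : k < n)
    (hnk : 2 ≤ n - k)
    (X₁ : Matrix (Fin m) (Fin n) ℝ) (J : Finset (Fin n)) (hJ : J.card = k)
    (Y : Matrix (Fin m) {j // j ∈ J} ℝ) (hY : Y = X₁.submatrix id Subtype.val)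
    (X₂ : Matrix (Fin m) {j // j ∉ J} ℝ) (hX₂ : X₂ = X₁.submatrix id Subtype.val)
    (xbar₁ ybar : Fin m → ℝ)
    (hxbar₁ : ∀ i, xbar₁ i = (∑ j, X₁ i j) / (n : ℝ))
    (hybar : ∀ i, ybar i = (∑ j, Y i j) / (k : ℝ))
    (K : Matrix (Fin m) {j // j ∈ J} ℝ)
    (hK : K = Matrix.of fun i j =>
      Y i j - (ybar i + Real.sqrt ((n : ℝ) / ((n : ℝ) - k)) * (ybar i - xbar₁ i))) :
    ((n : ℝ) - k - 1) • sampleCov X₂ =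
      ((n : ℝ) - 1) • sampleCov X₁ - K * Kᵀ := by
  subst hY hX₂ hK
  have hcard1 : Fintype.card {j // j ∈ J} = k := by
    simpa using hJ
  have hcard2 : Fintype.card {j // j ∉ J} = n - k := by
    simp [Fintype.card_subtype_compl, hJ]
  have hkR : (0:ℝ) < k := by exact_mod_cast hk
  have hnR : (0:ℝ) < n := by exact_mod_cast lt_of_le_of_lt (Nat.zero_le k) hkn
  have hknR : (k:ℝ) < n := by exact_mod_cast hkn
  have hnkR : (0:ℝ) < (n:ℝ) - k := by linarith
  have hnk2 : (2:ℝ) ≤ (n:ℝ) - k := by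
    have : ((2:ℕ):ℝ) ≤ ((n - k : ℕ):ℝ) := by exact_mod_cast hnk
    rwa [Nat.cast_sub hkn.le] at this
  have hs2 : Real.sqrt ((n : ℝ) / ((n : ℝ) - k)) ^ 2 = (n : ℝ) / ((n : ℝ) - k) :=
    Real.sq_sqrt (by positivity)
  ext a b
  simp only [sampleCov, Matrix.smul_apply, Matrix.sub_apply, Matrix.mul_apply,
    Matrix.transpose_apply, Matrix.of_apply, Matrix.submatrix_apply, id_eq,
    smul_eq_mul, hcard1, hcard2, Fintype.card_fin, Nat.cast_sub hkn.le]
  have hmem : ∀ f : Fin n → ℝ, ∑ x : {j // j ∈ J}, f x.val = ∑ j ∈ J, f j :=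
    fun f => Finset.sum_coe_sort J f
  have hcompl : ∀ f : Fin n → ℝ, ∑ x : {j // j ∉ J}, f x.val = ∑ j ∈ Jᶜ, f j :=
    fun f => (Finset.sum_subtype Jᶜ (fun x => Finset.mem_compl) f).symm
  simp only [hmem, hcompl]
  rw [sum_shift_mul, sum_shift_mul, sum_shift_mul]
  have hmem2 : ∑ x : {j // j ∈ J}, X₁ a x.val * X₁ b x.val = ∑ j ∈ J, X₁ a j * X₁ b j :=
    hmem (fun j => X₁ a j * X₁ b j)
  have hcompl2 : ∑ x : {j // j ∉ J}, X₁ a x.val * X₁ b x.val = ∑ j ∈ Jᶜ, X₁ a j * X₁ b j :=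
    hcompl (fun j => X₁ a j * X₁ b j)
  simp only [Matrix.submatrix_apply, id_eq, hmem, hcompl, hmem2, hcompl2, Finset.card_univ,
    hcard1, hcard2, Fintype.card_fin, Nat.cast_sub hkn.le, hxbar₁, hybar]
  have h1 : ∑ j ∈ Jᶜ, X₁ a j = (∑ j, X₁ a j) - ∑ j ∈ J, X₁ a j := by
    rw [eq_sub_iff_add_eq, Finset.sum_compl_add_sum]
  have h2 : ∑ j ∈ Jᶜ, X₁ b j = (∑ j, X₁ b j) - ∑ j ∈ J, X₁ b j := by
    rw [eq_sub_iff_add_eq, Finset.sum_compl_add_sum]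
  have h3 : ∑ j ∈ Jᶜ, X₁ a j * X₁ b j = (∑ j, X₁ a j * X₁ b j) - ∑ j ∈ J, X₁ a j * X₁ b j := by
    rw [eq_sub_iff_add_eq, Finset.sum_compl_add_sum]
  rw [h1, h2, h3]
  set TA := ∑ j, X₁ a j
  set TB := ∑ j, X₁ b j
  set SA := ∑ j ∈ J, X₁ a j
  set SB := ∑ j ∈ J, X₁ b j
  set P := ∑ j, X₁ a j * X₁ b j
  set Q := ∑ j ∈ J, X₁ a j * X₁ b j
  set s := Real.sqrt ((n : ℝ) / ((n : ℝ) - k))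
  have hk0 : (k:ℝ) ≠ 0 := ne_of_gt hkR
  have hn0 : (n:ℝ) ≠ 0 := ne_of_gt hnR
  have hnk0 : (n:ℝ) - k ≠ 0 := ne_of_gt hnkR
  have hnk10 : (n:ℝ) - k - 1 ≠ 0 := by linarith
  have hn10 : (n:ℝ) - 1 ≠ 0 := by linarith
  rw [mul_inv_cancel_left₀ hnk10, mul_inv_cancel_left₀ hn10]
  linear_combination (norm := (field_simp; ring))
    ((k:ℝ) * (SA/k - TA/n) * (SB/k - TB/n)) * hs2
end

section
/- Rank-k covariance downdate (minus-sign variant): With X₁, X₂, Y, S₁, S₂, x̄₁, ȳ as in the rank-k downdate setup, the identity (n−k−1)·S₂ = (n−1)·S₁ − KKᵀ also holds with K = Y − (ȳ − √(n/(n−k))·(ȳ − x̄₁))·1ₖᵀ. -/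
open Matrix

private lemma sum_centered {ι : Type*} [Fintype ι] (x y : ι → ℝ) (p q : ℝ) :
    ∑ j, (x j - p) * (y j - q) =
      (∑ j, x j * y j) - p * (∑ j, y j) - q * (∑ j, x j) + (Fintype.card ι : ℝ) * (p * q) := by
  have h : ∀ j, (x j - p) * (y j - q) = x j * y j - p * (y j) - q * (x j) + p * q := by
    intro j; ring
  rw [Finset.sum_congr rfl (fun j _ => h j)]
  simp only [Finset.sum_add_distrib, Finset.sum_sub_distrib, ← Finset.mul_sum,
    Finset.sum_const, Finset.card_univ, nsmul_eq_mul]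
  ring

private lemma quad (s q k a a' b b' B B' : ℝ) (hB : B = k * b) (hB' : B' = k * b')
    (hs : s * s = q) :
    (b - s * (b - a)) * B' + (b' - s * (b' - a')) * B
      - k * ((b - s * (b - a)) * (b' - s * (b' - a')))
    = k * (b * b') - k * q * ((b - a) * (b' - a')) := by
  subst hB hB'
  linear_combination (-(k * (b - a) * (b' - a'))) * hs

/-- Rank-k covariance matrix downdate (minus-sign variant). -/
theorem rank_k_covariance_downdate_minus {m n k : ℕ} (hk : 1 ≤ k) (hkn : k < n)
    (hnk : 2 ≤ n - k)
    (X₁ : Matrix (Fin m) (Fin n) ℝ) (J : Finset (Fin n)) (hJ : J.card = k)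
    (Y : Matrix (Fin m) {j // j ∈ J} ℝ) (hY : Y = X₁.submatrix id Subtype.val)
    (X₂ : Matrix (Fin m) {j // j ∉ J} ℝ) (hX₂ : X₂ = X₁.submatrix id Subtype.val)
    (xbar₁ ybar : Fin m → ℝ)
    (hxbar₁ : ∀ i, xbar₁ i = (∑ j, X₁ i j) / (n : ℝ))
    (hybar : ∀ i, ybar i = (∑ j, Y i j) / (k : ℝ))
    (K : Matrix (Fin m) {j // j ∈ J} ℝ)
    (hK : K = Matrix.of fun i j =>
      Y i j - (ybar i - Real.sqrt ((n : ℝ) / ((n : ℝ) - k)) * (ybar i - xbar₁ i))) :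
    ((n : ℝ) - k - 1) • sampleCov X₂ =
      ((n : ℝ) - 1) • sampleCov X₁ - K * Kᵀ := by
  subst hY hX₂ hK
  have hkle : k ≤ n := hkn.le
  have hcast : ((n - k : ℕ) : ℝ) = (n : ℝ) - k := by
    push_cast [hkle]; ring
  have hk0 : (k : ℝ) ≠ 0 := Nat.cast_ne_zero.mpr (by omega)
  have hn0 : (n : ℝ) ≠ 0 := Nat.cast_ne_zero.mpr (by omega)
  have hnkpos : (0 : ℝ) < (n : ℝ) - k := by
    rw [← hcast]; exact_mod_cast (by omega : 0 < n - k)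
  have hnk0 : (n : ℝ) - k ≠ 0 := ne_of_gt hnkpos
  have hnk1 : (n : ℝ) - k - 1 ≠ 0 := by
    have h2 : (2 : ℝ) ≤ (n : ℝ) - k := by rw [← hcast]; exact_mod_cast hnk
    linarith
  have hn1 : (n : ℝ) - 1 ≠ 0 := by
    have h2 : (2 : ℝ) ≤ (n : ℝ) := by exact_mod_cast (by omega : 2 ≤ n)
    linarith
  have hs : Real.sqrt ((n : ℝ) / ((n : ℝ) - k)) * Real.sqrt ((n : ℝ) / ((n : ℝ) - k))
      = (n : ℝ) / ((n : ℝ) - k) :=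
    Real.mul_self_sqrt (div_nonneg (Nat.cast_nonneg n) hnkpos.le)
  have hcJ : ((Fintype.card {j // j ∈ J} : ℕ) : ℝ) = (k : ℝ) := by
    norm_cast
    simpa using (Fintype.card_coe J).trans hJ
  have hcJc : ((Fintype.card {j // j ∉ J} : ℕ) : ℝ) = (n : ℝ) - k := by
    rw [← hcast]
    norm_cast
    rw [Fintype.card_subtype_compl]
    simp [hJ]
  have hsumJ : ∀ f : Fin n → ℝ, (∑ j : {j // j ∈ J}, f j.val) = ∑ j ∈ J, f j := by
    intro f; exact (Finset.sum_subtype J (fun x => Iff.rfl) f).symm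
  have hsumC : ∀ f : Fin n → ℝ, (∑ j : {j // j ∉ J}, f j.val) = (∑ j, f j) - ∑ j ∈ J, f j := by
    intro f
    rw [← Finset.sum_subtype Jᶜ (fun x => Finset.mem_compl) f, eq_sub_iff_add_eq, add_comm]
    exact Finset.sum_add_sum_compl J f
  ext i i'
  simp only [sampleCov, Matrix.smul_apply, Matrix.sub_apply, Matrix.mul_apply,
    Matrix.transpose_apply, Matrix.of_apply, smul_eq_mul, Matrix.submatrix_apply, id_eq,
    Fintype.card_fin]
  simp only [Matrix.submatrix_apply, id_eq] at hybar
  rw [hcJc, mul_inv_cancel_left₀ hnk1, mul_inv_cancel_left₀ hn1]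
  rw [sum_centered, sum_centered, sum_centered]
  rw [hcJ, hcJc, Fintype.card_fin]
  rw [hsumC (fun t => X₁ i t * X₁ i' t), hsumC (X₁ i), hsumC (X₁ i'),
    hsumJ (fun t => X₁ i t * X₁ i' t), hsumJ (X₁ i), hsumJ (X₁ i')]
  rw [hxbar₁ i, hxbar₁ i', hybar i, hybar i', hsumJ (X₁ i), hsumJ (X₁ i')]
  set s := Real.sqrt ((n : ℝ) / ((n : ℝ) - k)) with hsdef
  set SA := ∑ j : Fin n, X₁ i j with hSA
  set SA' := ∑ j : Fin n, X₁ i' j with hSA'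
  set SJ := ∑ j ∈ J, X₁ i j with hSJ
  set SJ' := ∑ j ∈ J, X₁ i' j with hSJ'
  set T := ∑ j : Fin n, X₁ i j * X₁ i' j with hT
  set TJ := ∑ j ∈ J, X₁ i j * X₁ i' j with hTJ
  have hB : SJ = (k : ℝ) * (SJ / k) := by field_simp
  have hB' : SJ' = (k : ℝ) * (SJ' / k) := by field_simp
  have h1 := quad s ((n : ℝ) / ((n : ℝ) - k)) k (SA / n) (SA' / n) (SJ / k) (SJ' / k)
    SJ SJ' hB hB' hs
  have hrest :
      T - TJ - (SA - SJ) / ((n : ℝ) - k) * (SA' - SJ') - (SA' - SJ') / ((n : ℝ) - k) * (SA - SJ)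
        + ((n : ℝ) - k) * ((SA - SJ) / ((n : ℝ) - k) * ((SA' - SJ') / ((n : ℝ) - k)))
      = (T - SA / n * SA' - SA' / n * SA + n * (SA / n * (SA' / n))) - TJ
        + ((k : ℝ) * (SJ / k * (SJ' / k))
          - (k : ℝ) * ((n : ℝ) / ((n : ℝ) - k)) * ((SJ / k - SA / n) * (SJ' / k - SA' / n))) := by
    field_simp
    ring
  linear_combination hrest - h1
end

section
/- Rank-k covariance update: Let X₁ be an m×n real matrix (n ≥ 2) with sample covariance S₁, let Y be an m×k matrix, and let X₂ = [X₁ Y] with sample covariance S₂. Let x̄₁ and ȳ be the column means of X₁ and Y. Then (n+k−1)·S₂ = (n−1)·S₁ + KKᵀ, where K = Y − (ȳ + √(n/(n+k))·(ȳ − x̄₁))·1ₖᵀ. -/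
open Matrix

section Scatter

variable {m ι κ : Type*} [Fintype ι] [Fintype κ]

noncomputable def colMean (Z : Matrix m ι ℝ) (i : m) : ℝ :=
  (∑ j, Z i j) / Fintype.card ι

def scatterAbout (Z : Matrix m ι ℝ) (a : m → ℝ) : Matrix m m ℝ :=
  (Z - replicateCol ι a) * (Z - replicateCol ι a)ᵀ

theorem card_mul_colMean (Z : Matrix m ι ℝ) (i : m) :
    Fintype.card ι * colMean Z i = ∑ j, Z i j := by
  rcases isEmpty_or_nonempty ι with _ | _
  · simp
  · exact mul_div_cancel₀ _ (Nat.cast_ne_zero.mpr Fintype.card_ne_zero)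

theorem sub_one_smul_sampleCov {r : ℕ} (Z : Matrix (Fin r) ι ℝ)
    (h : (Fintype.card ι : ℝ) ≠ 1) :
    ((Fintype.card ι : ℝ) - 1) • sampleCov Z = scatterAbout Z (colMean Z) := by
  rw [sampleCov, smul_inv_smul₀ (sub_ne_zero.mpr h)]
  rfl

theorem scatterAbout_eq_add_vecMulVec (Z : Matrix m ι ℝ) (a : m → ℝ) :
    scatterAbout Z a = scatterAbout Z (colMean Z) +
      (Fintype.card ι : ℝ) • vecMulVec (colMean Z - a) (colMean Z - a) := by
  ext i i'
  simp only [scatterAbout, Matrix.mul_apply, Matrix.add_apply, Matrix.smul_apply, vecMulVec_apply,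
    transpose_apply, Matrix.sub_apply, replicateCol_apply, Pi.sub_apply, smul_eq_mul]
  simp only [mul_sub, sub_mul, Finset.sum_sub_distrib, ← Finset.mul_sum, ← Finset.sum_mul,
    Finset.sum_const, Finset.card_univ, nsmul_eq_mul, ← card_mul_colMean]
  ring

theorem scatterAbout_fromCols (X : Matrix m ι ℝ) (Y : Matrix m κ ℝ) (a : m → ℝ) :
    scatterAbout (fromCols X Y) a = scatterAbout X a + scatterAbout Y a := by
  have hcentered : fromCols X Y - replicateCol (ι ⊕ κ) a =
      fromCols (X - replicateCol ι a) (Y - replicateCol κ a) := by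
    ext i (j | j) <;> rfl
  rw [scatterAbout, hcentered, transpose_fromCols, fromCols_mul_fromRows]
  rfl

theorem card_smul_colMean_fromCols (X : Matrix m ι ℝ) (Y : Matrix m κ ℝ) :
    ((Fintype.card ι : ℝ) + Fintype.card κ) • colMean (fromCols X Y) =
      (Fintype.card ι : ℝ) • colMean X + (Fintype.card κ : ℝ) • colMean Y := by
  ext i
  simp only [Pi.smul_apply, Pi.add_apply, smul_eq_mul]
  rw [← Nat.cast_add, ← Fintype.card_sum, card_mul_colMean, card_mul_colMean, card_mul_colMean,
    Fintype.sum_sum_type]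
  rfl

theorem scatterAbout_fromCols_colMean (X : Matrix m ι ℝ) (Y : Matrix m κ ℝ) :
    scatterAbout (fromCols X Y) (colMean (fromCols X Y)) =
      scatterAbout X (colMean X) + scatterAbout Y (colMean Y) +
        ((Fintype.card ι : ℝ) * Fintype.card κ / (Fintype.card ι + Fintype.card κ)) •
          vecMulVec (colMean Y - colMean X) (colMean Y - colMean X) := by
  rw [scatterAbout_fromCols, scatterAbout_eq_add_vecMulVec X, scatterAbout_eq_add_vecMulVec Y]
  set n : ℝ := (Fintype.card ι : ℝ)
  set k : ℝ := (Fintype.card κ : ℝ)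
  rcases eq_or_ne (n + k) 0 with h | h
  · obtain ⟨hn, hk⟩ : n = 0 ∧ k = 0 := by
      constructor <;> linarith [show 0 ≤ n by positivity, show 0 ≤ k by positivity]
    simp [hn, hk]
  have hμ (i : m) : colMean (fromCols X Y) i = (n * colMean X i + k * colMean Y i) / (n + k) := by
    rw [eq_div_iff h, mul_comm]
    simpa using congrFun (card_smul_colMean_fromCols X Y) i
  ext i i'
  simp only [Matrix.add_apply, Matrix.smul_apply, vecMulVec_apply, Pi.sub_apply, smul_eq_mul, hμ]
  field_simp
  ring

theorem scatterAbout_colMean_add_smul (Z : Matrix m ι ℝ) (c : ℝ) (d : m → ℝ) :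
    scatterAbout Z (colMean Z + c • d) =
      scatterAbout Z (colMean Z) + (Fintype.card ι * c ^ 2) • vecMulVec d d := by
  rw [scatterAbout_eq_add_vecMulVec Z, sub_add_cancel_left, neg_vecMulVec, vecMulVec_neg, neg_neg,
    smul_vecMulVec, vecMulVec_smul, smul_smul, smul_smul, sq, mul_assoc]

end Scatter

theorem rank_k_covariance_update_general {m n k : ℕ} (hn : 2 ≤ n)
    (X₁ : Matrix (Fin m) (Fin n) ℝ) (Y : Matrix (Fin m) (Fin k) ℝ)
    (xbar₁ ybar : Fin m → ℝ)
    (hxbar₁ : ∀ i, xbar₁ i = (∑ j, X₁ i j) / (n : ℝ))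
    (hybar : ∀ i, ybar i = (∑ j, Y i j) / (k : ℝ))
    (K : Matrix (Fin m) (Fin k) ℝ)
    (hK : K = Matrix.of fun i j =>
      Y i j - (ybar i + Real.sqrt ((n : ℝ) / ((n : ℝ) + k)) * (ybar i - xbar₁ i))) :
    ((n : ℝ) + k - 1) • sampleCov (Matrix.fromCols X₁ Y) =
      ((n : ℝ) - 1) • sampleCov X₁ + K * Kᵀ := by
  obtain rfl : xbar₁ = colMean X₁ := funext fun i => by simp [hxbar₁, colMean]
  obtain rfl : ybar = colMean Y := funext fun i => by simp [hybar, colMean]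
  set c := Real.sqrt ((n : ℝ) / ((n : ℝ) + k))
  have hKK : K * Kᵀ = scatterAbout Y (colMean Y + c • (colMean Y - colMean X₁)) := by
    subst hK; rfl
  have hn' : (2 : ℝ) ≤ n := by exact_mod_cast hn
  have hc : c ^ 2 = n / (n + k) := Real.sq_sqrt (by positivity)
  have hS₂ := sub_one_smul_sampleCov (fromCols X₁ Y) (by simp; linarith)
  have hS₁ := sub_one_smul_sampleCov X₁ (by simp; linarith)
  simp only [Fintype.card_sum, Fintype.card_fin, Nat.cast_add] at hS₂ hS₁
  rw [hS₂, hS₁, hKK, scatterAbout_fromCols_colMean, scatterAbout_colMean_add_smul, hc]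
  simp only [Fintype.card_fin, add_assoc]
  congr 3
  ring

/-- Rank-k covariance matrix update. -/
theorem rank_k_covariance_update {m n k : ℕ} (hn : 2 ≤ n) (hk : 1 ≤ k)
    (X₁ : Matrix (Fin m) (Fin n) ℝ) (Y : Matrix (Fin m) (Fin k) ℝ)
    (xbar₁ ybar : Fin m → ℝ)
    (hxbar₁ : ∀ i, xbar₁ i = (∑ j, X₁ i j) / (n : ℝ))
    (hybar : ∀ i, ybar i = (∑ j, Y i j) / (k : ℝ))
    (K : Matrix (Fin m) (Fin k) ℝ)
    (hK : K = Matrix.of fun i j =>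
      Y i j - (ybar i + Real.sqrt ((n : ℝ) / ((n : ℝ) + k)) * (ybar i - xbar₁ i))) :
    ((n : ℝ) + k - 1) • sampleCov (Matrix.fromCols X₁ Y) =
      ((n : ℝ) - 1) • sampleCov X₁ + K * Kᵀ :=
  rank_k_covariance_update_general hn X₁ Y xbar₁ ybar hxbar₁ hybar K hK
end

section
/- Bennett-form rank-k downdate: Let X₁ be an m×n real matrix with sample covariance S₁, let Y be the m×k matrix of columns removed from X₁, and let X₂ be the m×(n−k) matrix of remaining columns with sample covariance S₂ and column mean x̄₂; let x̄₁ be the column mean of X₁. Then (n−k−1)·S₂ = (n−1)·S₁ − (Y − x̄₁·1ₖᵀ)(Y − x̄₂·1ₖᵀ)ᵀ. -/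
open Matrix

private lemma expand_sum {n : ℕ} (T : Finset (Fin n)) (f g : Fin n → ℝ) (c c' : ℝ) :
    ∑ j ∈ T, (f j - c) * (g j - c') =
      (∑ j ∈ T, f j * g j) - c' * (∑ j ∈ T, f j) - c * (∑ j ∈ T, g j)
        + (T.card : ℝ) * (c * c') := by
  simp only [sub_mul, mul_sub, Finset.sum_sub_distrib, Finset.sum_const, nsmul_eq_mul,
    ← Finset.sum_mul, ← Finset.mul_sum]
  ring

/-- Bennett-form rank-k covariance downdate. -/
theorem bennett_rank_k_downdate {m n k : ℕ} (hk : 1 ≤ k) (hkn : k < n)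
    (hnk : 2 ≤ n - k)
    (X₁ : Matrix (Fin m) (Fin n) ℝ) (J : Finset (Fin n)) (hJ : J.card = k)
    (Y : Matrix (Fin m) {j // j ∈ J} ℝ) (hY : Y = X₁.submatrix id Subtype.val)
    (X₂ : Matrix (Fin m) {j // j ∉ J} ℝ) (hX₂ : X₂ = X₁.submatrix id Subtype.val)
    (xbar₁ xbar₂ : Fin m → ℝ)
    (hxbar₁ : ∀ i, xbar₁ i = (∑ j, X₁ i j) / (n : ℝ))
    (hxbar₂ : ∀ i, xbar₂ i = (∑ j, X₂ i j) / ((n : ℝ) - k)) :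
    ((n : ℝ) - k - 1) • sampleCov X₂ =
      ((n : ℝ) - 1) • sampleCov X₁ -
        (Matrix.of fun i j => Y i j - xbar₁ i) *
          (Matrix.of fun i (j : {j // j ∈ J}) => Y i j - xbar₂ i)ᵀ := by
  subst hY hX₂
  have hkn' : k ≤ n := hkn.le
  have hcJ : Fintype.card {j // j ∈ J} = k := by
    simpa using hJ
  have hcC : Fintype.card {j // j ∉ J} = n - k := by
    simp [Fintype.card_subtype_compl, hcJ, Fintype.card_fin]
  have hsubC : ∀ (f : Fin n → ℝ), ∑ j : {j // j ∉ J}, f j.val = ∑ j ∈ Jᶜ, f j := by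
    intro f
    exact (Finset.sum_subtype Jᶜ (fun x => Finset.mem_compl) f).symm
  have hsubJ : ∀ (f : Fin n → ℝ), ∑ j : {j // j ∈ J}, f j.val = ∑ j ∈ J, f j := by
    intro f
    exact (Finset.sum_subtype J (fun x => Iff.rfl) f).symm
  have hcC' : ((n - k : ℕ) : ℝ) = (n : ℝ) - k := by
    push_cast [Nat.cast_sub hkn']; ring
  have hn2 : 2 ≤ n := by omega
  have hnk2 : (2 : ℝ) ≤ (n : ℝ) - k := by
    rw [← hcC']; exact_mod_cast hnk
  have hn2' : (2 : ℝ) ≤ (n : ℝ) := by exact_mod_cast hn2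
  have h1 : ((n : ℝ) - 1) ≠ 0 := by linarith
  have h2 : ((n : ℝ) - k - 1) ≠ 0 := by linarith
  have hn0 : (n : ℝ) ≠ 0 := by linarith
  have hnk0 : ((n : ℝ) - k) ≠ 0 := by linarith
  ext i i'
  simp only [sampleCov, Matrix.smul_apply, Matrix.sub_apply, Matrix.mul_apply,
    Matrix.of_apply, Matrix.transpose_apply, Matrix.submatrix_apply, id_def,
    smul_eq_mul, Fintype.card_fin, hcC, hcJ, hcC', hxbar₁, hxbar₂, hsubC, hsubJ]
  rw [hsubC (fun x => (X₁ i x - (∑ j ∈ Jᶜ, X₁ i j) / (↑n - ↑k)) * (X₁ i' x - (∑ j ∈ Jᶜ, X₁ i' j) / (↑n - ↑k))),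
    hsubJ (fun x => (X₁ i x - (∑ j : Fin n, X₁ i j) / ↑n) * (X₁ i' x - (∑ j ∈ Jᶜ, X₁ i' j) / (↑n - ↑k))),
    ← mul_assoc, ← mul_assoc, mul_inv_cancel₀ h2, mul_inv_cancel₀ h1,
    one_mul, one_mul]
  have hcompl : ((Jᶜ.card : ℕ) : ℝ) = (n : ℝ) - k := by
    rw [Finset.card_compl, hJ, Fintype.card_fin, hcC']
  rw [← Finset.sum_add_sum_compl J (fun x => (X₁ i x - (∑ j : Fin n, X₁ i j) / ↑n) * (X₁ i' x - (∑ j : Fin n, X₁ i' j) / ↑n)),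
    ← Finset.sum_add_sum_compl J (fun j => X₁ i j), ← Finset.sum_add_sum_compl J (fun j => X₁ i' j),
    expand_sum, expand_sum, expand_sum, expand_sum, hJ, hcompl]
  set SJ := ∑ j ∈ J, X₁ i j
  set SC := ∑ j ∈ Jᶜ, X₁ i j
  set SJ' := ∑ j ∈ J, X₁ i' j
  set SC' := ∑ j ∈ Jᶜ, X₁ i' j
  field_simp
  ring
end

section
/- Cross-term identity for mixed updates: With X₁ (m×n₁, mean x̄₁), Y_u (m×k_u, mean ȳ_u), Y_d (m×k_d, mean ȳ_d) where Y_d consists of columns of X₁, X_u = [X₁ Y_u] with mean x̄_u, and X₂ the matrix obtained by removing Y_d from X_u with mean x̄₂, the outer-product identity k_u·(ȳ_u − x̄₁)(x̄_u − x̄₂)ᵀ = k_d·(x̄_u − x̄₁)(ȳ_d − x̄₂)ᵀ holds. -/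
open Matrix

/-!
Pooling a sample of size `a` and sum `s` with one of size `b` and sum `t` moves the mean by
`b / (a + b)` times the gap between the two means, i.e. `b (ȳ - x̄) = (a + b) (x̄_pool - x̄)`.
Applied to adding `Y_u` to `X₁`, and to `X_u` seen as `X₂` pooled with `Y_d`, this gives
`k_u (ȳ_u - x̄₁) = N (x̄_u - x̄₁)` and `k_d (ȳ_d - x̄₂) = N (x̄_u - x̄₂)` with `N = n₁ + k_u`;
moving the common factor `N` across the outer product yields the identity.
-/

theorem mul_sub_div_eq_add_mul_sub_div {K : Type*} [Field K] {a b : K}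
    (ha : a ≠ 0) (hb : b ≠ 0) (hab : a + b ≠ 0) (s t : K) :
    b * (t / b - s / a) = (a + b) * ((s + t) / (a + b) - s / a) := by
  field_simp
  ring

theorem smul_vecMulVec_eq_of_smul_eq {α ι κ : Type*} [CommSemiring α]
    {k k' N : α} {u v : ι → α} {w z : κ → α} (huv : k • u = N • v) (hwz : k' • w = N • z) :
    k • vecMulVec u z = k' • vecMulVec v w := by
  rw [← smul_vecMulVec, huv, smul_vecMulVec, ← vecMulVec_smul, ← hwz, vecMulVec_smul]

theorem sum_fromCols_apply {α ι κ₁ κ₂ : Type*} [AddCommMonoid α] [Fintype κ₁] [Fintype κ₂]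
    (A : Matrix ι κ₁ α) (B : Matrix ι κ₂ α) (i : ι) :
    ∑ j, fromCols A B i j = ∑ j, A i j + ∑ j, B i j :=
  Fintype.sum_sum_type _

theorem mixed_cross_term_identity_general {m n₁ ku kd : ℕ}
    (hku : 1 ≤ ku) (hkd : 1 ≤ kd) (hn₁ : 1 ≤ n₁) (hn₂ : kd ≤ n₁ + ku - 1)
    (X₁ : Matrix (Fin m) (Fin n₁) ℝ) (J : Finset (Fin n₁))
    (Yd : Matrix (Fin m) {j // j ∈ J} ℝ) (hYd : Yd = X₁.submatrix id Subtype.val)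
    (Yu : Matrix (Fin m) (Fin ku) ℝ)
    (Xu : Matrix (Fin m) (Fin n₁ ⊕ Fin ku) ℝ) (hXu : Xu = Matrix.fromCols X₁ Yu)
    (X₂ : Matrix (Fin m) ({j // j ∉ J} ⊕ Fin ku) ℝ)
    (hX₂ : X₂ = Matrix.fromCols (X₁.submatrix id Subtype.val) Yu)
    (xbar₁ xbaru xbar₂ ybaru ybard : Fin m → ℝ)
    (hxbar₁ : ∀ i, xbar₁ i = (∑ j, X₁ i j) / (n₁ : ℝ))
    (hxbaru : ∀ i, xbaru i = (∑ j, Xu i j) / ((n₁ : ℝ) + ku))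
    (hxbar₂ : ∀ i, xbar₂ i = (∑ j, X₂ i j) / ((n₁ : ℝ) + ku - kd))
    (hybaru : ∀ i, ybaru i = (∑ j, Yu i j) / (ku : ℝ))
    (hybard : ∀ i, ybard i = (∑ j, Yd i j) / (kd : ℝ)) :
    (ku : ℝ) • Matrix.vecMulVec (fun i => ybaru i - xbar₁ i) (fun i => xbaru i - xbar₂ i) =
      (kd : ℝ) • Matrix.vecMulVec (fun i => xbaru i - xbar₁ i) (fun i => ybard i - xbar₂ i) := by
  have hn₁' : (n₁ : ℝ) ≠ 0 := Nat.cast_ne_zero.mpr (by omega)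
  have hku' : (ku : ℝ) ≠ 0 := Nat.cast_ne_zero.mpr (by omega)
  have hkd' : (kd : ℝ) ≠ 0 := Nat.cast_ne_zero.mpr (by omega)
  have hN : (n₁ : ℝ) + ku ≠ 0 := by positivity
  have hN₂ : (n₁ : ℝ) + ku - kd ≠ 0 := by
    have : (kd : ℝ) < n₁ + ku := by exact_mod_cast (by omega : kd < n₁ + ku)
    exact (sub_pos.mpr this).ne'
  have hsplit : ∀ i, ∑ j, X₂ i j + ∑ j, Yd i j = ∑ j, Xu i j := fun i => by
    have hX₁ : ∑ j : {j // j ∈ J}, X₁ i j + ∑ j : {j // j ∉ J}, X₁ i j = ∑ j, X₁ i j := by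
      convert Fintype.sum_subtype_add_sum_subtype (· ∈ J) (X₁ i)
    simp only [hX₂, hYd, hXu, sum_fromCols_apply, submatrix_apply, id_eq]
    linarith
  have h_add : (ku : ℝ) • (fun i => ybaru i - xbar₁ i) =
      ((n₁ : ℝ) + ku) • (fun i => xbaru i - xbar₁ i) := funext fun i => by
    simp only [Pi.smul_apply, smul_eq_mul, hybaru, hxbar₁, hxbaru, hXu, sum_fromCols_apply]
    exact mul_sub_div_eq_add_mul_sub_div hn₁' hku' hN _ _
  have h_del : (kd : ℝ) • (fun i => ybard i - xbar₂ i) =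
      ((n₁ : ℝ) + ku) • (fun i => xbaru i - xbar₂ i) := funext fun i => by
    have h := mul_sub_div_eq_add_mul_sub_div hN₂ hkd' (by rwa [sub_add_cancel])
      (∑ j, X₂ i j) (∑ j, Yd i j)
    rw [sub_add_cancel, hsplit] at h
    simpa only [Pi.smul_apply, smul_eq_mul, hybard, hxbar₂, hxbaru] using h
  exact smul_vecMulVec_eq_of_smul_eq h_add h_del

/-- Cross-term outer-product identity for mixed covariance updates. -/
theorem mixed_cross_term_identity {m n₁ ku kd : ℕ}
    (hku : 1 ≤ ku) (hkd : 1 ≤ kd) (hn₁ : 1 ≤ n₁) (hn₂ : kd ≤ n₁ + ku - 1)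
    (X₁ : Matrix (Fin m) (Fin n₁) ℝ) (J : Finset (Fin n₁)) (hJ : J.card = kd)
    (Yd : Matrix (Fin m) {j // j ∈ J} ℝ) (hYd : Yd = X₁.submatrix id Subtype.val)
    (Yu : Matrix (Fin m) (Fin ku) ℝ)
    (Xu : Matrix (Fin m) (Fin n₁ ⊕ Fin ku) ℝ) (hXu : Xu = Matrix.fromCols X₁ Yu)
    (X₂ : Matrix (Fin m) ({j // j ∉ J} ⊕ Fin ku) ℝ)
    (hX₂ : X₂ = Matrix.fromCols (X₁.submatrix id Subtype.val) Yu)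
    (xbar₁ xbaru xbar₂ ybaru ybard : Fin m → ℝ)
    (hxbar₁ : ∀ i, xbar₁ i = (∑ j, X₁ i j) / (n₁ : ℝ))
    (hxbaru : ∀ i, xbaru i = (∑ j, Xu i j) / ((n₁ : ℝ) + ku))
    (hxbar₂ : ∀ i, xbar₂ i = (∑ j, X₂ i j) / ((n₁ : ℝ) + ku - kd))
    (hybaru : ∀ i, ybaru i = (∑ j, Yu i j) / (ku : ℝ))
    (hybard : ∀ i, ybard i = (∑ j, Yd i j) / (kd : ℝ)) :
    (ku : ℝ) • Matrix.vecMulVec (fun i => ybaru i - xbar₁ i) (fun i => xbaru i - xbar₂ i) =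
      (kd : ℝ) • Matrix.vecMulVec (fun i => xbaru i - xbar₁ i) (fun i => ybard i - xbar₂ i) :=
  mixed_cross_term_identity_general hku hkd hn₁ hn₂ X₁ J Yd hYd Yu Xu hXu X₂ hX₂ xbar₁ xbaru xbar₂
    ybaru ybard hxbar₁ hxbaru hxbar₂ hybaru hybard
end

section
/- Rank-k mixed update/downdate: In the mixed setting (X₁ m×n₁ with covariance S₁, Y_u m×k_u appended, Y_d m×k_d removed, X₂ m×n₂ with covariance S₂, n₂ = n₁+k_u−k_d, n₁ ≠ n₂), setting c = (n₂ + √(n₁n₂))/(n₂ − n₁), z = x̄₁ + c·(x̄₂ − x̄₁), K_u = Y_u − z·1_{k_u}ᵀ, and K_d = Y_d − z·1_{k_d}ᵀ, one has (n₂−1)·S₂ = (n₁−1)·S₁ + K_uK_uᵀ − K_dK_dᵀ. -/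
/-!
For any point `a`, the scatter `∑ₗ (xₗ - a)(xₗ - a)ᵀ` of a family of columns is additive over
disjoint unions of columns, and equals the scatter about the mean plus `N (x̄ - a)(x̄ - a)ᵀ`.
Taking `a = z`, the scatter of `X₂` about `z` is that of `X₁` plus `K_u K_uᵀ` minus `K_d K_dᵀ`,
and the two mean corrections `n₂ (x̄₂ - z)(x̄₂ - z)ᵀ` and `n₁ (x̄₁ - z)(x̄₁ - z)ᵀ` agree:
`x̄₂ - z = (1 - c)(x̄₂ - x̄₁)`, `x̄₁ - z = -c (x̄₂ - x̄₁)`, and `c` is a root of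
`n₂ (1 - c)² = n₁ c²`.
-/

open Matrix

section Scatter

variable {κ ι ι' R : Type*} [Fintype ι] [Fintype ι'] [CommRing R]

def centerCols (Z : Matrix κ ι R) (a : κ → R) : Matrix κ ι R :=
  Matrix.of fun i j => Z i j - a i

def scatter (Z : Matrix κ ι R) (a : κ → R) : Matrix κ κ R :=
  centerCols Z a * (centerCols Z a)ᵀ

theorem scatter_fromCols (A : Matrix κ ι R) (B : Matrix κ ι' R) (a : κ → R) :
    scatter (fromCols A B) a = scatter A a + scatter B a := by
  have : centerCols (fromCols A B) a = fromCols (centerCols A a) (centerCols B a) := by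
    ext i (j | j) <;> rfl
  rw [scatter, this, transpose_fromCols, fromCols_mul_fromRows]
  rfl

theorem scatter_subtype_add_scatter_subtype (Z : Matrix κ ι R) (a : κ → R)
    (p : ι → Prop) [DecidablePred p] :
    scatter (Z.submatrix id (Subtype.val : {j // p j} → ι)) a +
      scatter (Z.submatrix id (Subtype.val : {j // ¬p j} → ι)) a = scatter Z a := by
  ext i i'
  exact Fintype.sum_subtype_add_sum_subtype p fun j => centerCols Z a i j * centerCols Z a i' j

end Scatter

section Mean

variable {κ ι K : Type*} [Fintype ι] [Field K] [CharZero K]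

def rowMean (Z : Matrix κ ι K) (i : κ) : K :=
  (∑ l, Z i l) / Fintype.card ι

theorem sum_sub_rowMean (Z : Matrix κ ι K) (i : κ) : ∑ l, (Z i l - rowMean Z i) = 0 := by
  rcases isEmpty_or_nonempty ι with _ | _
  · simp
  · rw [Finset.sum_sub_distrib, Finset.sum_const, Finset.card_univ, nsmul_eq_mul, rowMean,
      mul_div_cancel₀ _ (Nat.cast_ne_zero.mpr Fintype.card_ne_zero), sub_self]

theorem centerCols_rowMean_eq_zero_of_card_eq_one (Z : Matrix κ ι K)
    (h : Fintype.card ι = 1) : centerCols Z (rowMean Z) = 0 := by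
  have : Subsingleton ι := Fintype.card_le_one_iff_subsingleton.mp h.le
  ext i l
  show Z i l - rowMean Z i = 0
  rw [← Fintype.sum_subsingleton (fun l => Z i l - rowMean Z i) l, sum_sub_rowMean]

theorem scatter_eq_scatter_rowMean_add (Z : Matrix κ ι K) (a : κ → K) :
    scatter Z a = scatter Z (rowMean Z) +
      (Fintype.card ι : K) • vecMulVec (rowMean Z - a) (rowMean Z - a) := by
  ext i i'
  set μ := rowMean Z
  change ∑ l, (Z i l - a i) * (Z i' l - a i') =
    ∑ l, (Z i l - μ i) * (Z i' l - μ i') + (Fintype.card ι : K) * ((μ i - a i) * (μ i' - a i'))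
  calc ∑ l, (Z i l - a i) * (Z i' l - a i')
      = ∑ l, ((Z i l - μ i) * (Z i' l - μ i') + (μ i' - a i') * (Z i l - μ i) +
          (μ i - a i) * (Z i' l - μ i') + (μ i - a i) * (μ i' - a i')) :=
        Finset.sum_congr rfl fun _ _ => by ring
    _ = _ := by
        simp only [Finset.sum_add_distrib, ← Finset.mul_sum, sum_sub_rowMean, μ,
          Finset.sum_const, Finset.card_univ, nsmul_eq_mul]
        ring

end Mean

theorem card_sub_one_smul_sampleCov {m : ℕ} {ι : Type*} [Fintype ι] (Z : Matrix (Fin m) ι ℝ) :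
    ((Fintype.card ι : ℝ) - 1) • sampleCov Z = scatter Z (rowMean Z) := by
  by_cases h : Fintype.card ι = 1
  · rw [scatter, centerCols_rowMean_eq_zero_of_card_eq_one Z h, h]
    simp
  · exact smul_inv_smul₀ (sub_ne_zero.mpr (by exact_mod_cast h)) _

theorem mul_one_sub_sq_eq_mul_sq {a b : ℝ} (ha : 0 ≤ a) (hb : 0 ≤ b) (hab : a ≠ b) :
    b * (1 - (b + √(a * b)) / (b - a)) ^ 2 = a * ((b + √(a * b)) / (b - a)) ^ 2 := by
  have hba : b - a ≠ 0 := sub_ne_zero.mpr hab.symm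
  have hsq := Real.sq_sqrt (mul_nonneg ha hb)
  generalize √(a * b) = s at hsq ⊢
  field_simp
  linear_combination (b - a) * hsq

theorem smul_vecMulVec_sub_eq_of_mul_sq_eq {κ R : Type*} [CommRing R] (x₁ x₂ : κ → R)
    {a b c : R} (h : b * (1 - c) ^ 2 = a * c ^ 2) :
    b • vecMulVec (x₂ - (x₁ + c • (x₂ - x₁))) (x₂ - (x₁ + c • (x₂ - x₁))) =
      a • vecMulVec (x₁ - (x₁ + c • (x₂ - x₁))) (x₁ - (x₁ + c • (x₂ - x₁))) := by
  have h₂ : x₂ - (x₁ + c • (x₂ - x₁)) = (1 - c) • (x₂ - x₁) := by module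
  have h₁ : x₁ - (x₁ + c • (x₂ - x₁)) = (-c) • (x₂ - x₁) := by module
  rw [h₂, h₁, smul_vecMulVec, vecMulVec_smul, smul_vecMulVec, vecMulVec_smul, smul_smul,
    smul_smul, smul_smul, smul_smul]
  congr 1
  linear_combination h

theorem rank_k_mixed_update_downdate_general {m n₁ ku kd : ℕ}
    (hne : n₁ ≠ n₁ + ku - kd)
    (X₁ : Matrix (Fin m) (Fin n₁) ℝ) (J : Finset (Fin n₁)) (hJ : J.card = kd)
    (Yd : Matrix (Fin m) {j // j ∈ J} ℝ) (hYd : Yd = X₁.submatrix id Subtype.val)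
    (Yu : Matrix (Fin m) (Fin ku) ℝ)
    (X₂ : Matrix (Fin m) ({j // j ∉ J} ⊕ Fin ku) ℝ)
    (hX₂ : X₂ = Matrix.fromCols (X₁.submatrix id Subtype.val) Yu)
    (n₂ : ℕ) (hn₂def : n₂ = n₁ + ku - kd)
    (xbar₁ xbar₂ : Fin m → ℝ)
    (hxbar₁ : ∀ i, xbar₁ i = (∑ j, X₁ i j) / (n₁ : ℝ))
    (hxbar₂ : ∀ i, xbar₂ i = (∑ j, X₂ i j) / (n₂ : ℝ))
    (c : ℝ) (hc : c = ((n₂ : ℝ) + Real.sqrt ((n₁ : ℝ) * n₂)) / ((n₂ : ℝ) - n₁))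
    (z : Fin m → ℝ) (hz : ∀ i, z i = xbar₁ i + c * (xbar₂ i - xbar₁ i))
    (Ku : Matrix (Fin m) (Fin ku) ℝ) (hKu : Ku = Matrix.of fun i j => Yu i j - z i)
    (Kd : Matrix (Fin m) {j // j ∈ J} ℝ) (hKd : Kd = Matrix.of fun i j => Yd i j - z i) :
    ((n₂ : ℝ) - 1) • sampleCov X₂ =
      ((n₁ : ℝ) - 1) • sampleCov X₁ + Ku * Kuᵀ - Kd * Kdᵀ := by
  have hcard : Fintype.card ({j // j ∉ J} ⊕ Fin ku) = n₂ := by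
    have := hJ ▸ J.card_le_univ
    simp only [Fintype.card_sum, Fintype.card_fin, Fintype.card_subtype_compl, Fintype.card_coe,
      hJ] at this ⊢
    omega
  have hmean₁ : rowMean X₁ = xbar₁ := funext fun i => by rw [hxbar₁, rowMean, Fintype.card_fin]
  have hmean₂ : rowMean X₂ = xbar₂ := funext fun i => by rw [hxbar₂, rowMean, hcard]
  have hcorr : (n₂ : ℝ) • vecMulVec (xbar₂ - z) (xbar₂ - z) =
      (n₁ : ℝ) • vecMulVec (xbar₁ - z) (xbar₁ - z) := by
    obtain rfl : z = xbar₁ + c • (xbar₂ - xbar₁) := funext hz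
    refine smul_vecMulVec_sub_eq_of_mul_sq_eq xbar₁ xbar₂ ?_
    rw [hc]
    exact mul_one_sub_sq_eq_mul_sq (Nat.cast_nonneg n₁) (Nat.cast_nonneg n₂)
      (by rw [hn₂def]; exact_mod_cast hne)
  have hS₁ : ((n₁ : ℝ) - 1) • sampleCov X₁ = scatter X₁ xbar₁ := by
    rw [← hmean₁, ← card_sub_one_smul_sampleCov, Fintype.card_fin]
  have hS₂ : ((n₂ : ℝ) - 1) • sampleCov X₂ = scatter X₂ xbar₂ := by
    rw [← hmean₂, ← card_sub_one_smul_sampleCov, hcard]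
  have hX₁ : scatter Yd z + scatter (X₁.submatrix id (Subtype.val : {j // j ∉ J} → _)) z =
      scatter X₁ z :=
    hYd ▸ by convert scatter_subtype_add_scatter_subtype X₁ z (· ∈ J)
  subst hKu hKd
  rw [hS₁, hS₂]
  change _ = _ + scatter Yu z - scatter Yd z
  calc scatter X₂ xbar₂
      = scatter X₂ z - (n₂ : ℝ) • vecMulVec (xbar₂ - z) (xbar₂ - z) := by
        rw [scatter_eq_scatter_rowMean_add X₂ z, hmean₂, hcard, add_sub_cancel_right]
    _ = scatter X₁ z + scatter Yu z - scatter Yd z -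
          (n₁ : ℝ) • vecMulVec (xbar₁ - z) (xbar₁ - z) := by
        rw [hcorr, hX₂, scatter_fromCols, ← hX₁]
        abel
    _ = scatter X₁ xbar₁ + scatter Yu z - scatter Yd z := by
        rw [scatter_eq_scatter_rowMean_add X₁ z, hmean₁, Fintype.card_fin]
        abel

/-- Rank-k mixed update/downdate of the sample covariance matrix, n₁ ≠ n₂. -/
theorem rank_k_mixed_update_downdate {m n₁ ku kd : ℕ}
    (hn₁ : 2 ≤ n₁) (hkd : kd < n₁) (hn₂ : 2 ≤ n₁ + ku - kd)
    (hne : n₁ ≠ n₁ + ku - kd)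
    (X₁ : Matrix (Fin m) (Fin n₁) ℝ) (J : Finset (Fin n₁)) (hJ : J.card = kd)
    (Yd : Matrix (Fin m) {j // j ∈ J} ℝ) (hYd : Yd = X₁.submatrix id Subtype.val)
    (Yu : Matrix (Fin m) (Fin ku) ℝ)
    (X₂ : Matrix (Fin m) ({j // j ∉ J} ⊕ Fin ku) ℝ)
    (hX₂ : X₂ = Matrix.fromCols (X₁.submatrix id Subtype.val) Yu)
    (n₂ : ℕ) (hn₂def : n₂ = n₁ + ku - kd)
    (xbar₁ xbar₂ : Fin m → ℝ)
    (hxbar₁ : ∀ i, xbar₁ i = (∑ j, X₁ i j) / (n₁ : ℝ))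
    (hxbar₂ : ∀ i, xbar₂ i = (∑ j, X₂ i j) / (n₂ : ℝ))
    (c : ℝ) (hc : c = ((n₂ : ℝ) + Real.sqrt ((n₁ : ℝ) * n₂)) / ((n₂ : ℝ) - n₁))
    (z : Fin m → ℝ) (hz : ∀ i, z i = xbar₁ i + c * (xbar₂ i - xbar₁ i))
    (Ku : Matrix (Fin m) (Fin ku) ℝ) (hKu : Ku = Matrix.of fun i j => Yu i j - z i)
    (Kd : Matrix (Fin m) {j // j ∈ J} ℝ) (hKd : Kd = Matrix.of fun i j => Yd i j - z i) :
    ((n₂ : ℝ) - 1) • sampleCov X₂ =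
      ((n₁ : ℝ) - 1) • sampleCov X₁ + Ku * Kuᵀ - Kd * Kdᵀ :=
  rank_k_mixed_update_downdate_general hne X₁ J hJ Yd hYd Yu X₂ hX₂ n₂ hn₂def xbar₁ xbar₂ hxbar₁
    hxbar₂ c hc z hz Ku hKu Kd hKd
end
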